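/- arXiv:1001.4541 — 2 statements merged into one kernel-verified Lean document; each statement's English description precedes it below -/
import Mathlib

section
/- Let s ∈ ℝ with 1/2 < s < 1 and let n, k ∈ ℤ with n ≥ k. Then for every r with 0 < r < 1, −n·((1 − r²)/r)·Φ_{2n,2k}(r) + (1 − r²)·Φ_{2n,2k}'(r) + k·((1 + r²)/r)·Φ_{2n,2k}(r) = −2·((s − k)·(1 − s − k)/(1 + n − k))·Φ_{2n,2k−2}(r). (This expresses the action of the lowering operator: L.Φ_{2n,2k} = −2·((s−k)(1−s−k)/(1+n−k))·Φ_{2n,2k−2} for n ≥ k.) -/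
/-- The Gauss hypergeometric series `F(a, b; c; x) = Σ (a)_m (b)_m / ((c)_m m!) x^m`. -/
noncomputable def hyperF (a b c x : ℝ) : ℝ :=
  ∑' m : ℕ, ((ascPochhammer ℝ m).eval a * (ascPochhammer ℝ m).eval b /
    ((ascPochhammer ℝ m).eval c * (Nat.factorial m))) * x ^ m

/-- The sign `ε = 1` if `n ≥ k`, `ε = −1` otherwise. -/
noncomputable def eps (n k : ℤ) : ℝ := if k ≤ n then 1 else -1

/-- `Φ_{2n,2k}(r) = (1 − r²)^s r^{|n−k|} F(s − εk, s + εn; 1 + |n−k|; r²)`. -/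
noncomputable def Phi (s : ℝ) (n k : ℤ) (r : ℝ) : ℝ :=
  (1 - r ^ 2) ^ s * r ^ (n - k).natAbs *
    hyperF (s - eps n k * k) (s + eps n k * n) (1 + (n - k).natAbs) (r ^ 2)

/-!
For `k ≤ n` we have `Φ_{2n,2k}(r) = (1 - r²)^s r^(n-k) F(r²)` with `F = F(a, b; c; ·)`,
`a = s - k`, `b = s + n`, `c = 1 + n - k`. Because the power of `r` is exactly `n - k`, the
terms of `L Φ_{2n,2k}` of order `1/r` cancel and
`L Φ_{2n,2k}(r) = 2 (1 - r²)^s r^(n-k+1) ((1 - x) F'(x) - a F(x))` at `x = r²`.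
Gauss's contiguous relation `(1 - x) F' - a F = -(a (c - b) / c) F(a + 1, b; c + 1; ·)`, an
identity between the coefficients of the two power series, identifies the right-hand side with a
multiple of `Φ_{2n,2k-2}`. As `s` is not an integer, no parameter is a nonpositive integer, so all
the series converge on the unit disc.
-/

open FormalMultilinearSeries Polynomial

namespace FormalMultilinearSeries

variable {𝕜 : Type*} [NontriviallyNormedField 𝕜]

theorem ofScalars_apply_const (c : ℕ → 𝕜) (n : ℕ) (x : 𝕜) :
    (ofScalars 𝕜 c n fun _ => x) = c n * x ^ n := by
  simp [mul_comm]

variable [CompleteSpace 𝕜] {c : ℕ → 𝕜} {x : 𝕜}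

theorem hasSum_ofScalars_sum (hx : ‖x‖ₑ < (ofScalars 𝕜 c).radius) :
    HasSum (fun n => c n * x ^ n) ((ofScalars 𝕜 c).sum x) :=
  ((ofScalars 𝕜 c).summable (by simpa using hx)).hasSum.congr_fun
    fun n => (ofScalars_apply_const c n x).symm

theorem differentiableAt_ofScalars_sum (hx : ‖x‖ₑ < (ofScalars 𝕜 c).radius) :
    DifferentiableAt 𝕜 (ofScalars 𝕜 c).sum x :=
  ((ofScalars 𝕜 c).hasFPowerSeriesOnBall (pos_of_gt hx)).differentiableOn.differentiableAt
    (Metric.isOpen_eball.mem_nhds (by simpa using hx))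

theorem hasSum_deriv_ofScalars_sum (hx : ‖x‖ₑ < (ofScalars 𝕜 c).radius) :
    HasSum (fun n => (n + 1) * c (n + 1) * x ^ n) (deriv (ofScalars 𝕜 c).sum x) := by
  have h := (((ofScalars 𝕜 c).hasFPowerSeriesOnBall (pos_of_gt hx)).fderiv.hasSum
    (y := x) (by simpa using hx)).mapL (ContinuousLinearMap.apply 𝕜 𝕜 1)
  rw [zero_add] at h
  refine h.congr_fun fun n => ?_
  -- pull `x` out of each slot of the multilinear map to reach `derivSeries_coeff_one`
  have hscale : (fun _ : Fin n => x) = fun _ => x • (1 : 𝕜) := by simp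
  rw [ContinuousLinearMap.apply_apply, hscale, ContinuousMultilinearMap.map_smul_univ,
    Finset.prod_const, Finset.card_univ, Fintype.card_fin]
  change _ = (x ^ n • (ofScalars 𝕜 c).derivSeries.coeff n) 1
  rw [_root_.smul_apply, derivSeries_coeff_one, coeff_ofScalars, smul_eq_mul, nsmul_eq_mul]
  push_cast
  ring

end FormalMultilinearSeries

theorem ascPochhammer_eval_succ_left {S : Type*} [CommSemiring S] (n : ℕ) (a : S) :
    (ascPochhammer S (n + 1)).eval a = a * (ascPochhammer S n).eval (a + 1) := by
  simp [ascPochhammer_succ_left, eval_comp]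

theorem ordinaryHypergeometricCoefficient_contiguous {𝕂 : Type*} [Field 𝕂] [CharZero 𝕂]
    (a b c : 𝕂) (hc : ∀ kn : ℕ, (kn : 𝕂) ≠ -c) (m : ℕ) :
    (m + 1) * ordinaryHypergeometricCoefficient a b c (m + 1)
        - (a + m) * ordinaryHypergeometricCoefficient a b c m
      = -(a * (c - b) / c) * ordinaryHypergeometricCoefficient (a + 1) b (c + 1) m := by
  have hc_add (j : ℕ) : c + j ≠ 0 := fun h => hc j (by linear_combination h)
  have hc0 : c ≠ 0 := by simpa using hc_add 0
  have hcm := hc_add m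
  have hm : (m.factorial : 𝕂) ≠ 0 := Nat.cast_ne_zero.mpr m.factorial_ne_zero
  have hPc : (ascPochhammer 𝕂 m).eval c ≠ 0 := by
    rw [Ne, ascPochhammer_eval_eq_zero_iff]
    rintro ⟨j, -, hj⟩
    exact hc j hj
  have hshift_a := ascPochhammer_eval_succ_left m a
  have hshift_c := ascPochhammer_eval_succ_left m c
  rw [ascPochhammer_succ_eval] at hshift_a hshift_c
  have hQc : (ascPochhammer 𝕂 m).eval (c + 1) ≠ 0 :=
    right_ne_zero_of_mul (hshift_c ▸ mul_ne_zero hPc hcm)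
  simp only [ordinaryHypergeometricCoefficient, ascPochhammer_succ_eval, Nat.factorial_succ]
  push_cast
  field_simp
  linear_combination
    (eval b (ascPochhammer 𝕂 m) * (b - c) * c * eval (c + 1) (ascPochhammer 𝕂 m)) * hshift_a
    - (eval b (ascPochhammer 𝕂 m) * (b - c) * a * eval (a + 1) (ascPochhammer 𝕂 m)) * hshift_c

section RCLike

variable {𝕂 : Type*} [RCLike 𝕂] {a b c : 𝕂} {x : 𝕂}

theorem enorm_lt_radius_ordinaryHypergeometricSeries
    (habc : ∀ kn : ℕ, (kn : 𝕂) ≠ -a ∧ (kn : 𝕂) ≠ -b ∧ (kn : 𝕂) ≠ -c) (hx : ‖x‖ < 1) :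
    ‖x‖ₑ < (ordinaryHypergeometricSeries 𝕂 a b c).radius := by
  rw [ordinaryHypergeometricSeries_radius_eq_one _ _ _ _ habc, ← ofReal_norm]
  exact ENNReal.ofReal_lt_one.mpr hx

theorem differentiableAt_ordinaryHypergeometric
    (habc : ∀ kn : ℕ, (kn : 𝕂) ≠ -a ∧ (kn : 𝕂) ≠ -b ∧ (kn : 𝕂) ≠ -c) (hx : ‖x‖ < 1) :
    DifferentiableAt 𝕂 (₂F₁ a b c) x :=
  differentiableAt_ofScalars_sum (enorm_lt_radius_ordinaryHypergeometricSeries habc hx)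

theorem ordinaryHypergeometric_contiguous
    (habc : ∀ kn : ℕ, (kn : 𝕂) ≠ -a ∧ (kn : 𝕂) ≠ -b ∧ (kn : 𝕂) ≠ -c) (hx : ‖x‖ < 1) :
    (1 - x) * deriv (₂F₁ a b c) x - a * ₂F₁ a b c x
      = -(a * (c - b) / c) * ₂F₁ (a + 1) b (c + 1) x := by
  set C := ordinaryHypergeometricCoefficient a b c
  have hrad := enorm_lt_radius_ordinaryHypergeometricSeries habc hx
  have hF : HasSum (fun m => C m * x ^ m) (₂F₁ a b c x) := hasSum_ofScalars_sum hrad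
  have hF' : HasSum (fun m => (m + 1) * C (m + 1) * x ^ m) (deriv (₂F₁ a b c) x) :=
    hasSum_deriv_ofScalars_sum hrad
  have hxF' : HasSum (fun m : ℕ => m * C m * x ^ m) (x * deriv (₂F₁ a b c) x) := by
    refine (hasSum_nat_add_iff' 1).mp ?_
    rw [Finset.sum_range_one, Nat.cast_zero, zero_mul, zero_mul, sub_zero]
    exact (hF'.mul_left x).congr_fun fun m => by push_cast; ring
  have hsum := (hF'.sub hxF').sub (hF.mul_left a)
  rw [sub_mul, one_mul, ← hsum.tsum_eq, ordinaryHypergeometric_eq_tsum, ← tsum_mul_left]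
  refine tsum_congr fun m => ?_
  rw [smul_eq_mul]
  linear_combination x ^ m * ordinaryHypergeometricCoefficient_contiguous a b c
    (fun kn => (habc kn).2.2) m

end RCLike

noncomputable def loweringOperator (n k : ℝ) (f : ℝ → ℝ) (r : ℝ) : ℝ :=
  -n * ((1 - r ^ 2) / r) * f r + (1 - r ^ 2) * deriv f r + k * ((1 + r ^ 2) / r) * f r

theorem loweringOperator_of_hasDerivAt {s n k r G' : ℝ} {N : ℕ} {G : ℝ → ℝ}
    (hN : (N : ℝ) = n - k) (hG : HasDerivAt G G' (r ^ 2)) (hr : 0 < r) (hr1 : r < 1) :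
    loweringOperator n k (fun t => (1 - t ^ 2) ^ s * t ^ N * G (t ^ 2)) r
      = 2 * ((1 - r ^ 2) ^ s * r ^ (N + 1)) * ((k - s) * G (r ^ 2) + (1 - r ^ 2) * G') := by
  have h1r : 0 < 1 - r ^ 2 := by nlinarith
  have hsq : HasDerivAt (fun t => t ^ 2) (2 * r) r := by simpa using hasDerivAt_pow 2 r
  have hΨ : HasDerivAt (fun t => (1 - t ^ 2) ^ s * t ^ N * G (t ^ 2))
      (((0 - 2 * r) * s * (1 - r ^ 2) ^ (s - 1) * r ^ N + (1 - r ^ 2) ^ s * (N * r ^ (N - 1)))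
        * G (r ^ 2) + (1 - r ^ 2) ^ s * r ^ N * (G' * (2 * r))) r :=
    ((((hasDerivAt_const r 1).sub hsq).rpow_const (Or.inl h1r.ne')).mul
      (hasDerivAt_pow N r)).mul (HasDerivAt.comp (h₂ := G) (h := fun t => t ^ 2) r hG hsq)
  have hpow : (N : ℝ) * r ^ (N - 1) = N * r ^ N / r := by
    cases N with
    | zero => simp
    | succ j => field_simp; rw [Nat.add_sub_cancel, pow_succ]
  obtain rfl : n = N + k := by linarith
  rw [loweringOperator, hΨ.deriv, Real.rpow_sub_one h1r.ne', hpow]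
  field_simp
  ring

theorem hyperF_eq_ordinaryHypergeometric (a b c : ℝ) : hyperF a b c = ₂F₁ a b c := by
  rw [ordinaryHypergeometric_eq_tsum]
  funext x
  refine tsum_congr fun m => ?_
  rw [smul_eq_mul, div_eq_mul_inv, mul_inv]
  ring

theorem Phi_of_le (s : ℝ) {n k : ℤ} (hnk : k ≤ n) :
    Phi s n k = fun r => (1 - r ^ 2) ^ s * r ^ (n - k).natAbs *
      ₂F₁ (s - k) (s + n) (1 + (n - k).natAbs) (r ^ 2) := by
  funext r
  simp only [Phi, eps, if_pos hnk, one_mul, hyperF_eq_ordinaryHypergeometric]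

theorem ne_intCast_of_pos_of_lt_one {R : Type*} [Ring R] [LinearOrder R] [IsStrictOrderedRing R]
    {s : R} (h0 : 0 < s) (h1 : s < 1) (z : ℤ) : s ≠ z := by
  rintro rfl
  norm_cast at h0 h1
  omega

theorem lowering_operator_on_Phi (s : ℝ) (hs : 1/2 < s) (hs1 : s < 1) (n k : ℤ) (hnk : k ≤ n)
    (r : ℝ) (hr : 0 < r) (hr1 : r < 1) :
    -(n : ℝ) * ((1 - r ^ 2) / r) * Phi s n k r + (1 - r ^ 2) * deriv (Phi s n k) r +
      (k : ℝ) * ((1 + r ^ 2) / r) * Phi s n k r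
      = -2 * ((s - (k : ℝ)) * (1 - s - (k : ℝ)) / (1 + (n : ℝ) - (k : ℝ))) *
          Phi s n (k - 1) r := by
  set N := (n - k).natAbs with hNdef
  have hN : (N : ℝ) = n - k := by
    rw [hNdef, Nat.cast_natAbs, abs_of_nonneg (by omega)]
    push_cast
    ring
  have hs_ne := ne_intCast_of_pos_of_lt_one (by linarith : (0 : ℝ) < s) hs1
  have habc : ∀ kn : ℕ, (kn : ℝ) ≠ -(s - k) ∧ (kn : ℝ) ≠ -(s + n) ∧ (kn : ℝ) ≠ -(1 + N) :=
    fun kn => ⟨fun h => hs_ne (k - kn) (by push_cast; linarith),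
      fun h => hs_ne (-n - kn) (by push_cast; linarith),
      fun h => by linarith [kn.cast_nonneg (α := ℝ), N.cast_nonneg (α := ℝ)]⟩
  have hx : ‖r ^ 2‖ < 1 := by
    rw [Real.norm_eq_abs, abs_of_pos (by positivity)]
    nlinarith
  have hPhi_pred : Phi s n (k - 1) r
      = (1 - r ^ 2) ^ s * r ^ (N + 1) * ₂F₁ (s - k + 1) (s + n) (1 + N + 1) (r ^ 2) := by
    rw [Phi_of_le s (by omega : k - 1 ≤ n), show (n - (k - 1)).natAbs = N + 1 by omega]
    push_cast
    ring_nf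
  have hcont := ordinaryHypergeometric_contiguous habc hx
  rw [show (s - k) * (1 + N - (s + n)) / (1 + N) = (s - k) * (1 - s - k) / (1 + n - k) by
    rw [hN]; ring_nf] at hcont
  change loweringOperator n k (Phi s n k) r = _
  rw [Phi_of_le s hnk, ← hNdef, hPhi_pred, loweringOperator_of_hasDerivAt hN
    (differentiableAt_ordinaryHypergeometric habc hx).hasDerivAt hr hr1]
  linear_combination 2 * ((1 - r ^ 2) ^ s * r ^ (N + 1)) * hcont
end

section
/- Let s ∈ ℝ with 1/2 < s < 1 and let n, k ∈ ℤ, with ε = 1 if n ≥ k and ε = −1 otherwise. Then lim_{t → ∞} e^{(1 − s)·t} · Φ_{2n,2k}(tanh(t/2)) = 4^{1−s} · Γ(1 + |n − k|)·Γ(2s − 1)/(Γ(s − ε·k)·Γ(s + ε·n)), where Γ is the Gamma function. -/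
/-!
With `r = tanh (t / 2)` one has `e^t (1 - r²) = 4 / (1 + e^{-t})² → 4` and `r → 1`, and
`e^{(1-s)t} Φ(r) = (e^t (1 - r²))^{1-s} r^{|n-k|} (1 - r²)^σ F(a, b; c; r²)` with
`σ = a + b - c = 2s - 1 > 0`. So everything reduces to Gauss's boundary behaviour of `F` in the
divergent case: `(1 - x)^σ F(a, b; c; x) → Γ(c) Γ(σ) / (Γ(a) Γ(b))` as `x → 1⁻`.
For this, compare `F` with the binomial series `(1 - x)^{-σ} = Σ (σ)_m / m! x^m`. By Euler's
limit `(a)_m ~ m! m^{a-1} / Γ(a)` the ratio of the coefficients tends to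
`Γ(c) Γ(σ) / (Γ(a) Γ(b))`, and since the binomial series diverges at `1`, an Abelian argument
passes this limit on to the ratio of the sums.
-/

open Filter Topology Asymptotics Finset Set
open scoped Nat

theorem ascPochhammer_eval_eq_prod_range (a : ℝ) (m : ℕ) :
    (ascPochhammer ℝ m).eval a = ∏ j ∈ Finset.range m, (a + j) := by
  induction m with
  | zero => simp
  | succ m ih => rw [ascPochhammer_succ_eval, ih, Finset.prod_range_succ]

theorem tendsto_ascPochhammer_eval_div_rpow_mul_factorial {a : ℝ} (ha : ∀ m : ℕ, a ≠ -m) :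
    Tendsto (fun m : ℕ => (ascPochhammer ℝ m).eval a / ((m : ℝ) ^ (a - 1) * m !)) atTop
      (𝓝 (Real.Gamma a)⁻¹) := by
  have h := ((Real.GammaSeq_tendsto_Gamma a).inv₀ (Real.Gamma_ne_zero ha)).mul
    (tendsto_natCast_div_add_atTop a)
  rw [mul_one] at h
  refine h.congr' ?_
  filter_upwards [eventually_gt_atTop 0] with m hm
  have hm : (0 : ℝ) < m := by exact_mod_cast hm
  have ham : (m : ℝ) + a ≠ 0 := fun h => ha m (by linarith)
  rw [Real.GammaSeq, ← ascPochhammer_eval_eq_prod_range, ascPochhammer_succ_eval,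
    Real.rpow_sub_one hm.ne']
  field_simp
  ring

theorem tendsto_ascPochhammer_eval_mul_div_mul {a b c d : ℝ} (ha : ∀ m : ℕ, a ≠ -m)
    (hb : ∀ m : ℕ, b ≠ -m) (hc : ∀ m : ℕ, c ≠ -m) (hd : ∀ m : ℕ, d ≠ -m) (habcd : a + b = c + d) :
    Tendsto (fun m : ℕ => (ascPochhammer ℝ m).eval a * (ascPochhammer ℝ m).eval b /
        ((ascPochhammer ℝ m).eval c * (ascPochhammer ℝ m).eval d)) atTop
      (𝓝 (Real.Gamma c * Real.Gamma d / (Real.Gamma a * Real.Gamma b))) := by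
  have h := ((tendsto_ascPochhammer_eval_div_rpow_mul_factorial ha).mul
    (tendsto_ascPochhammer_eval_div_rpow_mul_factorial hb)).div
    ((tendsto_ascPochhammer_eval_div_rpow_mul_factorial hc).mul
      (tendsto_ascPochhammer_eval_div_rpow_mul_factorial hd))
    (mul_ne_zero (inv_ne_zero (Real.Gamma_ne_zero hc)) (inv_ne_zero (Real.Gamma_ne_zero hd)))
  rw [← mul_inv, ← mul_inv, inv_div_inv] at h
  refine h.congr' ?_
  filter_upwards [eventually_gt_atTop 0] with m hm
  have hm : (0 : ℝ) < m := by exact_mod_cast hm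
  have hscale : (m : ℝ) ^ (a - 1) * m ! * ((m : ℝ) ^ (b - 1) * m !) =
      (m : ℝ) ^ (c - 1) * m ! * ((m : ℝ) ^ (d - 1) * m !) := by
    have hpow : (m : ℝ) ^ (a - 1) * (m : ℝ) ^ (b - 1) = (m : ℝ) ^ (c - 1) * (m : ℝ) ^ (d - 1) := by
      rw [← Real.rpow_add hm, ← Real.rpow_add hm]
      congr 1
      linarith
    linear_combination (m ! : ℝ) ^ 2 * hpow
  simp only [Pi.div_apply, div_mul_div_comm, hscale]
  exact div_div_div_cancel_right₀ (by positivity) _ _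

theorem Ring.choose_add_natCast_sub_one (σ : ℝ) (m : ℕ) :
    Ring.choose (σ + m - 1) m = (ascPochhammer ℝ m).eval σ / m ! := by
  rw [← Ring.multichoose_eq, eq_div_iff (by positivity), mul_comm, ← nsmul_eq_mul,
    Ring.factorial_nsmul_multichoose_eq_ascPochhammer, Polynomial.ascPochhammer_smeval_eq_eval]

theorem hasSum_ascPochhammer_div_factorial_mul_pow (σ : ℝ) {x : ℝ} (hx : |x| < 1) :
    HasSum (fun m : ℕ => (ascPochhammer ℝ m).eval σ / m ! * x ^ m) ((1 - x) ^ (-σ)) := by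
  have h := (Real.one_div_one_sub_rpow_hasFPowerSeriesOnBall_zero σ).hasSum
    (y := x) (by simpa [← NNReal.coe_lt_one, enorm_eq_nnnorm] using hx)
  simp only [FormalMultilinearSeries.ofScalars_apply_eq, Ring.choose_add_natCast_sub_one,
    smul_eq_mul, zero_add] at h
  rwa [Real.rpow_neg (by linarith [le_abs_self x]), ← one_div]

theorem eventually_summable_of_tendsto_tsum_atTop {α ι : Type*} {f : α → ι → ℝ} {l : Filter α}
    (h : Tendsto (fun x => ∑' i, f x i) l atTop) : ∀ᶠ x in l, Summable (f x) := by
  filter_upwards [h.eventually_gt_atTop 0] with x hx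
  by_contra hs
  rw [tsum_eq_zero_of_not_summable hs] at hx
  exact hx.false

theorem isLittleO_tsum_mul_pow_nhdsLT_one {v w : ℕ → ℝ} (hv : ∀ m, 0 ≤ v m)
    (hw : w =o[atTop] v) (hdiv : Tendsto (fun x => ∑' m, v m * x ^ m) (𝓝[<] 1) atTop) :
    (fun x => ∑' m, w m * x ^ m) =o[𝓝[<] 1] fun x => ∑' m, v m * x ^ m := by
  refine IsLittleO.of_bound fun ε hε => ?_
  obtain ⟨M, hM⟩ := eventually_atTop.1 (hw.bound (half_pos hε))
  set C := ∑ m ∈ range M, |w m|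
  filter_upwards [Ioo_mem_nhdsLT zero_lt_one, eventually_summable_of_tendsto_tsum_atTop hdiv,
    hdiv.eventually_ge_atTop (2 * C / ε)] with x ⟨hx0, hx1⟩ hvs hCS
  set S := ∑' m, v m * x ^ m
  -- the first `M` terms contribute at most `C`, the others at most `ε / 2` times theirs in `S`
  have hhead : HasSum (fun m => if m < M then |w m| else 0) C := by
    have h : HasSum (fun m => if m < M then |w m| else 0)
        (∑ m ∈ range M, if m < M then |w m| else 0) :=
      hasSum_sum_of_ne_finset_zero fun m hm => if_neg (by simpa using hm)
    rwa [sum_congr rfl fun m hm => if_pos (mem_range.1 hm)] at h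
  have hbound : ‖∑' m, w m * x ^ m‖ ≤ C + ε / 2 * S := by
    refine tsum_of_norm_bounded (hhead.add (hvs.hasSum.mul_left (ε / 2))) fun m => ?_
    have hxm : 0 ≤ x ^ m := pow_nonneg hx0.le m
    rw [norm_mul, Real.norm_eq_abs, Real.norm_of_nonneg hxm]
    split_ifs with hm
    · have := mul_le_of_le_one_right (abs_nonneg (w m)) (pow_le_one₀ hx0.le hx1.le (n := m))
      have := mul_nonneg (half_pos hε).le (mul_nonneg (hv m) hxm)
      linarith
    · have := hM m (not_lt.1 hm)
      rw [Real.norm_eq_abs, Real.norm_of_nonneg (hv m)] at this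
      nlinarith
  have hS : 0 ≤ S := tsum_nonneg fun m => mul_nonneg (hv m) (pow_nonneg hx0.le m)
  rw [Real.norm_of_nonneg hS]
  have : C ≤ ε / 2 * S := by
    rw [div_le_iff₀ hε] at hCS
    linarith
  linarith

theorem tendsto_tsum_mul_pow_div_tsum_mul_pow_nhdsLT_one {u v : ℕ → ℝ} {L : ℝ}
    (hv : ∀ m, 0 < v m) (huv : Tendsto (fun m => u m / v m) atTop (𝓝 L))
    (hdiv : Tendsto (fun x => ∑' m, v m * x ^ m) (𝓝[<] 1) atTop) :
    Tendsto (fun x => (∑' m, u m * x ^ m) / ∑' m, v m * x ^ m) (𝓝[<] 1) (𝓝 L) := by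
  have hw : (fun m => u m - L * v m) =o[atTop] v := by
    refine (isLittleO_iff_tendsto' (Eventually.of_forall fun m h => absurd h (hv m).ne')).2 ?_
    simpa [sub_div, mul_div_cancel_right₀ _ (hv _).ne'] using huv.sub_const L
  have hsmall := (isLittleO_tsum_mul_pow_nhdsLT_one (fun m => (hv m).le) hw hdiv)
    |>.tendsto_div_nhds_zero
  rw [← zero_add L]
  refine (hsmall.add_const L).congr' ?_
  filter_upwards [eventually_summable_of_tendsto_tsum_atTop hdiv, hdiv.eventually_gt_atTop 0]
    with x hvs hS
  have hws : Summable fun m => (u m - L * v m) * x ^ m :=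
    summable_of_isBigO_nat hvs (hw.isBigO.mul (isBigO_refl _ _))
  have hsplit : ∑' m, u m * x ^ m = ∑' m, (u m - L * v m) * x ^ m + L * ∑' m, v m * x ^ m := by
    rw [← tsum_mul_left, ← hws.tsum_add (hvs.mul_left L)]
    exact tsum_congr fun m => by ring
  rw [hsplit, add_div, mul_div_cancel_right₀ _ hS.ne']

theorem tendsto_one_sub_rpow_neg_nhdsLT_one {σ : ℝ} (hσ : 0 < σ) :
    Tendsto (fun x : ℝ => (1 - x) ^ (-σ)) (𝓝[<] 1) atTop := by
  have h : Tendsto (fun x : ℝ => 1 - x) (𝓝[<] 1) (𝓝[>] 0) := by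
    refine tendsto_nhdsWithin_of_tendsto_nhds_of_eventually_within _ ?_ ?_
    · exact ((continuous_const.sub continuous_id).tendsto' (1 : ℝ) 0 (sub_self 1)).mono_left
        nhdsWithin_le_nhds
    · filter_upwards [self_mem_nhdsWithin] with x (hx : x < 1) using sub_pos.2 hx
  exact (tendsto_rpow_neg_nhdsGT_zero (neg_neg_of_pos hσ)).comp h

theorem tendsto_one_sub_rpow_mul_hyperF_nhdsLT_one {a b c : ℝ} (ha : ∀ m : ℕ, a ≠ -m)
    (hb : ∀ m : ℕ, b ≠ -m) (hc : ∀ m : ℕ, c ≠ -m) (habc : 0 < a + b - c) :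
    Tendsto (fun x => (1 - x) ^ (a + b - c) * hyperF a b c x) (𝓝[<] 1)
      (𝓝 (Real.Gamma c * Real.Gamma (a + b - c) / (Real.Gamma a * Real.Gamma b))) := by
  set σ := a + b - c
  set u : ℕ → ℝ := fun m => (ascPochhammer ℝ m).eval a * (ascPochhammer ℝ m).eval b /
    ((ascPochhammer ℝ m).eval c * m !)
  set v : ℕ → ℝ := fun m => (ascPochhammer ℝ m).eval σ / (m ! : ℝ)
  have hσ : ∀ m : ℕ, σ ≠ -m := fun m h => by linarith [h ▸ habc, (m.cast_nonneg : (0 : ℝ) ≤ m)]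
  have hbin : ∀ x ∈ Ioo (0 : ℝ) 1, HasSum (fun m => v m * x ^ m) ((1 - x) ^ (-σ)) :=
    fun x hx => hasSum_ascPochhammer_div_factorial_mul_pow σ (abs_lt.2 ⟨by linarith [hx.1], hx.2⟩)
  have hdiv : Tendsto (fun x => ∑' m, v m * x ^ m) (𝓝[<] 1) atTop :=
    (tendsto_one_sub_rpow_neg_nhdsLT_one habc).congr'
      (eventually_of_mem (Ioo_mem_nhdsLT zero_lt_one) fun x hx => (hbin x hx).tsum_eq.symm)
  have huv : Tendsto (fun m => u m / v m) atTop
      (𝓝 (Real.Gamma c * Real.Gamma σ / (Real.Gamma a * Real.Gamma b))) :=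
    (tendsto_ascPochhammer_eval_mul_div_mul ha hb hc hσ (by ring)).congr fun m => by
      simp only [u, v]
      rw [div_mul_eq_div_div, div_mul_eq_div_div,
        div_div_div_cancel_right₀ (Nat.cast_ne_zero.2 m.factorial_ne_zero)]
  refine (tendsto_tsum_mul_pow_div_tsum_mul_pow_nhdsLT_one
    (fun m => div_pos (ascPochhammer_pos m σ habc) (by positivity)) huv hdiv).congr' ?_
  filter_upwards [Ioo_mem_nhdsLT zero_lt_one] with x hx
  rw [(hbin x hx).tsum_eq, Real.rpow_neg (by linarith [hx.2]), div_inv_eq_mul, mul_comm]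
  rfl

theorem Real.tanh_half_eq (t : ℝ) :
    Real.tanh (t / 2) = (1 - Real.exp (-t)) / (1 + Real.exp (-t)) := by
  have h : Real.exp (-t) = Real.exp (-(t / 2)) ^ 2 := by rw [← Real.exp_nat_mul]; ring_nf
  have h' : Real.exp (t / 2) * Real.exp (-(t / 2)) = 1 := by
    rw [← Real.exp_add, add_neg_cancel, Real.exp_zero]
  rw [Real.tanh_eq, h]
  field_simp
  linear_combination 2 * Real.exp (-(t / 2)) * h'

theorem Real.exp_mul_one_sub_tanh_half_sq (t : ℝ) :
    Real.exp t * (1 - Real.tanh (t / 2) ^ 2) = 4 / (1 + Real.exp (-t)) ^ 2 := by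
  have h : Real.exp t * Real.exp (-t) = 1 := by rw [← Real.exp_add, add_neg_cancel, Real.exp_zero]
  rw [Real.tanh_half_eq]
  field_simp
  linear_combination 4 * h

theorem ContinuousAt.tendsto_comp_exp_neg_atTop {f : ℝ → ℝ} {y : ℝ} (hf : ContinuousAt f 0)
    (hy : f 0 = y) :
    Tendsto (fun t => f (Real.exp (-t))) atTop (𝓝 y) :=
  hy ▸ hf.tendsto.comp Real.tendsto_exp_neg_atTop_nhds_zero

theorem Real.tendsto_tanh_half_atTop : Tendsto (fun t => Real.tanh (t / 2)) atTop (𝓝 1) := by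
  simp_rw [Real.tanh_half_eq]
  exact ContinuousAt.tendsto_comp_exp_neg_atTop (f := fun y => (1 - y) / (1 + y))
    ((continuousAt_const.sub continuousAt_id).div (continuousAt_const.add continuousAt_id)
      (by norm_num)) (by norm_num)

theorem Real.tendsto_exp_mul_one_sub_tanh_half_sq_atTop :
    Tendsto (fun t => Real.exp t * (1 - Real.tanh (t / 2) ^ 2)) atTop (𝓝 4) := by
  simp_rw [Real.exp_mul_one_sub_tanh_half_sq]
  exact ContinuousAt.tendsto_comp_exp_neg_atTop (f := fun y => 4 / (1 + y) ^ 2)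
    (continuousAt_const.div ((continuousAt_const.add continuousAt_id).pow 2) (by norm_num))
    (by norm_num)

theorem add_intCast_ne_neg_natCast {s : ℝ} (h0 : 0 < s) (h1 : s < 1) (j : ℤ) (m : ℕ) :
    s + j ≠ -m := by
  intro h
  have hs : s = ((-m - j : ℤ) : ℝ) := by push_cast; linarith
  rw [hs] at h0 h1
  have : (0 : ℤ) < -m - j := by exact_mod_cast h0
  have : -m - j < (1 : ℤ) := by exact_mod_cast h1
  omega

theorem exists_intCast_eq_eps_mul (n k j : ℤ) : ∃ i : ℤ, eps n k * j = i := by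
  unfold eps
  split_ifs
  · exact ⟨j, one_mul _⟩
  · exact ⟨-j, by push_cast; ring⟩

theorem eps_mul_sub (n k : ℤ) : eps n k * ((n : ℝ) - k) = (n - k).natAbs := by
  rw [Nat.cast_natAbs, Int.cast_abs, Int.cast_sub]
  unfold eps
  split_ifs with h
  · rw [abs_of_nonneg (by exact_mod_cast sub_nonneg.2 h), one_mul]
  · rw [abs_of_neg (by exact_mod_cast sub_neg.2 (not_le.1 h))]
    ring

theorem exp_mul_Phi_eq (s : ℝ) (n k : ℤ) (t r : ℝ) (hr : r ^ 2 < 1) :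
    Real.exp ((1 - s) * t) * Phi s n k r =
      (Real.exp t * (1 - r ^ 2)) ^ (1 - s) * r ^ (n - k).natAbs *
        ((1 - r ^ 2) ^ (2 * s - 1) *
          hyperF (s - eps n k * k) (s + eps n k * n) (1 + (n - k).natAbs) (r ^ 2)) := by
  have hX : 0 < 1 - r ^ 2 := sub_pos.2 hr
  have hsplit : (1 - r ^ 2) ^ s = (1 - r ^ 2) ^ (1 - s) * (1 - r ^ 2) ^ (2 * s - 1) := by
    rw [← Real.rpow_add hX]
    ring_nf
  rw [Phi, Real.mul_rpow (Real.exp_pos t).le hX.le, mul_comm (1 - s), Real.exp_mul, hsplit]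
  ring

theorem Phi_asymptotics_at_infinity (s : ℝ) (hs : 1/2 < s) (hs1 : s < 1) (n k : ℤ) :
    Filter.Tendsto
      (fun t : ℝ => Real.exp ((1 - s) * t) * Phi s n k (Real.tanh (t / 2)))
      Filter.atTop
      (nhds ((4 : ℝ) ^ (1 - s) * Real.Gamma (1 + ((n - k).natAbs : ℝ)) * Real.Gamma (2 * s - 1) /
        (Real.Gamma (s - eps n k * (k : ℝ)) * Real.Gamma (s + eps n k * (n : ℝ))))) := by
  have hs0 : 0 < s := by linarith
  have ha : ∀ m : ℕ, s - eps n k * k ≠ -m := by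
    obtain ⟨i, hi⟩ := exists_intCast_eq_eps_mul n k k
    simpa [hi, sub_eq_add_neg] using add_intCast_ne_neg_natCast hs0 hs1 (-i)
  have hb : ∀ m : ℕ, s + eps n k * n ≠ -m := by
    obtain ⟨i, hi⟩ := exists_intCast_eq_eps_mul n k n
    simpa [hi] using add_intCast_ne_neg_natCast hs0 hs1 i
  have hc : ∀ m : ℕ, (1 + (n - k).natAbs : ℝ) ≠ -m := fun m => by
    linarith [(m.cast_nonneg : (0 : ℝ) ≤ m), ((n - k).natAbs.cast_nonneg : (0 : ℝ) ≤ _)]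
  have hσ : s - eps n k * k + (s + eps n k * n) - (1 + (n - k).natAbs) = 2 * s - 1 := by
    linear_combination eps_mul_sub n k
  have hF := tendsto_one_sub_rpow_mul_hyperF_nhdsLT_one ha hb hc (by linarith)
  rw [hσ] at hF
  have hr : Tendsto (fun t => Real.tanh (t / 2) ^ 2) atTop (𝓝[<] 1) :=
    tendsto_nhdsWithin_iff.2 ⟨by simpa using Real.tendsto_tanh_half_atTop.pow 2,
      Eventually.of_forall fun t => Real.tanh_sq_lt_one _⟩
  have hlim := ((Real.tendsto_exp_mul_one_sub_tanh_half_sq_atTop.rpow_const (p := 1 - s)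
    (Or.inl four_ne_zero)).mul (Real.tendsto_tanh_half_atTop.pow (n - k).natAbs)).mul (hF.comp hr)
  rw [one_pow, mul_one, ← mul_div_assoc, ← mul_assoc] at hlim
  exact hlim.congr fun t => (exp_mul_Phi_eq s n k t _ (Real.tanh_sq_lt_one _)).symm
end
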